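/- Let a < 0, 0 < η < 1, κ a measure on (0,∞) integrating x ↦ x ∧ x² with κ(ℝ) ∈ (0,∞]. With δ := 1 + 4/κ(ℝ) + inf{x : κ((0,x]) ≥ κ(ℝ)/2} and b := (δ − a + 2/η)², define Y(x) := 1 + (1/(√b κ((b,∞)))) 1_{(b,∞)}(x) − (1/(√b κ((0,δ]))) 1_{(0,δ]}(x) (the negative term omitted if κ(ℝ)=∞). Then a + ∫ x (Y(x)−1) κ(dx) ≥ a + √b − δ/√b ≥ 0. -/

import Mathlib

open MeasureTheory Set

/-!
On `(b, ∞)` the function `x` is bounded below by `b`, and on `(0, δ]` above by `δ`, so the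
positive perturbation of `Y` raises the drift by at least `b / √b = √b` and the negative one
lowers it by at most `δ / √b`. Since `√b = δ − a + 2/η`, the resulting lower bound
`a + √b − δ/√b = δ + 2/η − δ/√b` is nonnegative once `δ ≥ 1`, which holds because the quantile
defining `δ` is nonnegative.
-/

theorem sInf_setOf_le_measure_Ioc_nonneg (μ : Measure ℝ) (c : ℝ) :
    0 ≤ sInf {x : ℝ | c ≤ (μ (Ioc 0 x)).toReal} := by
  rcases le_or_gt c 0 with hc | hc
  · have huniv : {x : ℝ | c ≤ (μ (Ioc 0 x)).toReal} = univ :=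
      eq_univ_of_forall fun _ => hc.trans ENNReal.toReal_nonneg
    rw [huniv, Real.sInf_univ]
  · refine Real.sInf_nonneg fun x hx => ?_
    by_contra! hx0
    rw [mem_ofPred_eq, Ioc_eq_empty_of_le hx0.le, measure_empty, ENNReal.toReal_zero] at hx
    linarith

theorem integral_mul_indicator_const {α : Type*} [MeasurableSpace α] {μ : Measure α}
    (f : α → ℝ) {s : Set α} (hs : MeasurableSet s) (c : ℝ) :
    ∫ x, f x * s.indicator (fun _ => c) x ∂μ = (∫ x in s, f x ∂μ) * c := by
  simp_rw [← indicator_mul_right]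
  rw [integral_indicator hs, integral_mul_const]

theorem MeasureTheory.IntegrableOn.integrable_mul_indicator_const {α : Type*} [MeasurableSpace α]
    {μ : Measure α} {f : α → ℝ} {s : Set α} (hf : IntegrableOn f s μ) (hs : MeasurableSet s)
    (c : ℝ) : Integrable (fun x => f x * s.indicator (fun _ => c) x) μ := by
  simp_rw [← indicator_mul_right]
  exact IntegrableOn.integrable_indicator (hf.mul_const c) hs

section Tail

variable {μ : Measure ℝ} {b : ℝ}

theorem setLIntegral_Ioi_ofReal_lt_top
    (hμ : ∫⁻ x, ENNReal.ofReal (min x (x ^ 2)) ∂μ < ⊤) (hb : 1 ≤ b) :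
    ∫⁻ x in Ioi b, ENNReal.ofReal x ∂μ < ⊤ := by
  refine lt_of_le_of_lt ?_ hμ
  calc ∫⁻ x in Ioi b, ENNReal.ofReal x ∂μ
      = ∫⁻ x in Ioi b, ENNReal.ofReal (min x (x ^ 2)) ∂μ := by
        refine setLIntegral_congr_fun measurableSet_Ioi fun x (hx : b < x) => ?_
        rw [min_eq_left (by nlinarith)]
    _ ≤ ∫⁻ x, ENNReal.ofReal (min x (x ^ 2)) ∂μ := setLIntegral_le_lintegral _ _

theorem integrableOn_Ioi_id_of_lintegral_min_sq_lt_top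
    (hμ : ∫⁻ x, ENNReal.ofReal (min x (x ^ 2)) ∂μ < ⊤) (hb : 1 ≤ b) :
    IntegrableOn (fun x => x) (Ioi b) μ := by
  refine ⟨measurable_id.aestronglyMeasurable, ?_⟩
  rw [hasFiniteIntegral_iff_ofReal]
  · exact setLIntegral_Ioi_ofReal_lt_top hμ hb
  · exact (ae_restrict_iff' measurableSet_Ioi).mpr
      (ae_of_all _ fun x (hx : b < x) => show (0 : ℝ) ≤ x by linarith)

theorem measure_Ioi_lt_top_of_lintegral_min_sq_lt_top
    (hμ : ∫⁻ x, ENNReal.ofReal (min x (x ^ 2)) ∂μ < ⊤) (hb : 1 ≤ b) :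
    μ (Ioi b) < ⊤ := by
  have hmarkov : ENNReal.ofReal b * μ (Ioi b) ≤ ∫⁻ x in Ioi b, ENNReal.ofReal x ∂μ := by
    rw [← setLIntegral_const]
    exact setLIntegral_mono (by fun_prop) fun x hx => ENNReal.ofReal_le_ofReal hx.le
  refine ENNReal.lt_top_of_mul_ne_top_right ?_ (ENNReal.ofReal_pos.mpr (by linarith)).ne'
  exact (hmarkov.trans_lt (setLIntegral_Ioi_ofReal_lt_top hμ hb)).ne

theorem sqrt_le_setIntegral_Ioi_div
    (hμ : ∫⁻ x, ENNReal.ofReal (min x (x ^ 2)) ∂μ < ⊤) (hb : 1 ≤ b) (hpos : μ (Ioi b) ≠ 0) :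
    √b ≤ (∫ x in Ioi b, x ∂μ) / (√b * (μ (Ioi b)).toReal) := by
  have hfin := measure_Ioi_lt_top_of_lintegral_min_sq_lt_top hμ hb
  have hmass : 0 < (μ (Ioi b)).toReal := ENNReal.toReal_pos hpos hfin.ne
  have hlow : b * μ.real (Ioi b) ≤ ∫ x in Ioi b, x ∂μ :=
    setIntegral_ge_of_const_le_real measurableSet_Ioi hfin.ne (fun x hx => hx.le)
      (integrableOn_Ioi_id_of_lintegral_min_sq_lt_top hμ hb)
  rw [le_div_iff₀ (by positivity), ← mul_assoc, Real.mul_self_sqrt (by linarith)]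
  exact hlow

end Tail

theorem setIntegral_Ioc_div_le (μ : Measure ℝ) {δ t : ℝ} (hδ : 0 ≤ δ) (ht : 0 ≤ t) :
    (∫ x in Ioc 0 δ, x ∂μ) / (t * (μ (Ioc 0 δ)).toReal) ≤ δ / t := by
  rcases ENNReal.toReal_nonneg.eq_or_lt with hzero | hpos
  · -- this case includes `μ (Ioc 0 δ) = ∞`, since `ENNReal.toReal ∞ = 0`
    rw [← hzero, mul_zero, div_zero]
    positivity
  · have hfin : μ (Ioc 0 δ) ≠ ⊤ := fun h => by simp [h] at hpos
    have hup : ∫ x in Ioc 0 δ, x ∂μ ≤ δ * (μ (Ioc 0 δ)).toReal :=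
      (Real.le_norm_self _).trans <| norm_setIntegral_le_of_norm_le_const hfin.lt_top
        fun x hx => by rw [Real.norm_of_nonneg hx.1.le]; exact hx.2
    calc (∫ x in Ioc 0 δ, x ∂μ) / (t * (μ (Ioc 0 δ)).toReal)
        ≤ δ * (μ (Ioc 0 δ)).toReal / (t * (μ (Ioc 0 δ)).toReal) := by gcongr
      _ = δ / t := mul_div_mul_right _ _ hpos.ne'

theorem stmt9_general (κ : Measure ℝ)
    (hκint : ∫⁻ x, ENNReal.ofReal (min x (x ^ 2)) ∂κ < ⊤)
    (hub : ∀ c : ℝ, 0 < c → 0 < κ (Set.Ioi c))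
    (a η : ℝ) (ha : a < 0) (hη0 : 0 < η)
    (δ b : ℝ)
    (hδ : δ = 1 + 4 / (κ Set.univ).toReal +
      sInf {x : ℝ | (κ Set.univ).toReal / 2 ≤ (κ (Set.Ioc 0 x)).toReal})
    (hb : b = (δ - a + 2 / η) ^ 2)
    (Y : ℝ → ℝ)
    (hY : ∀ x, Y x = 1 + Set.indicator (Set.Ioi b)
        (fun _ => 1 / (Real.sqrt b * (κ (Set.Ioi b)).toReal)) x
      - (if κ Set.univ = ⊤ then 0 else
          Set.indicator (Set.Ioc 0 δ)
            (fun _ => 1 / (Real.sqrt b * (κ (Set.Ioc 0 δ)).toReal)) x)) :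
    a + Real.sqrt b - δ / Real.sqrt b ≤ a + ∫ x, x * (Y x - 1) ∂κ ∧
      0 ≤ a + Real.sqrt b - δ / Real.sqrt b := by
  have hδ1 : 1 ≤ δ := by
    have hquantile := sInf_setOf_le_measure_Ioc_nonneg κ ((κ univ).toReal / 2)
    have hmass : 0 ≤ 4 / (κ univ).toReal := by positivity
    linarith
  have hη : 0 < 2 / η := by positivity
  have hδs : δ < δ - a + 2 / η := by linarith
  have hsqrt : √b = δ - a + 2 / η := by rw [hb, Real.sqrt_sq (by linarith)]
  have hb1 : 1 ≤ b := by rw [hb]; nlinarith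
  have hquot : δ / √b ≤ 1 := by rw [div_le_one (by linarith)]; linarith
  refine ⟨?_, by rw [hsqrt] at hquot ⊢; linarith⟩
  have htail := sqrt_le_setIntegral_Ioi_div hκint hb1 (hub b (by linarith)).ne'
  have hsplit : ∀ x, x * (Y x - 1) =
      x * (Ioi b).indicator (fun _ => 1 / (√b * (κ (Ioi b)).toReal)) x -
        if κ univ = ⊤ then 0 else
          x * (Ioc 0 δ).indicator (fun _ => 1 / (√b * (κ (Ioc 0 δ)).toReal)) x := by
    intro x
    rw [hY]
    split_ifs <;> ring
  simp_rw [hsplit]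
  split_ifs with htop
  · simp only [sub_zero]
    rw [integral_mul_indicator_const _ measurableSet_Ioi, mul_one_div]
    have : 0 ≤ δ / √b := by positivity
    linarith
  · have : IsFiniteMeasure κ := ⟨lt_top_iff_ne_top.2 htop⟩
    have hhead := setIntegral_Ioc_div_le κ (by linarith) (Real.sqrt_nonneg b) (δ := δ)
    rw [integral_sub
      ((integrableOn_Ioi_id_of_lintegral_min_sq_lt_top hκint hb1).integrable_mul_indicator_const
        measurableSet_Ioi _)
      (continuous_id'.integrableOn_Ioc.integrable_mul_indicator_const measurableSet_Ioc _),
      integral_mul_indicator_const _ measurableSet_Ioi,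
      integral_mul_indicator_const _ measurableSet_Ioc, mul_one_div, mul_one_div]
    linarith

/-- Let `a < 0`, `0 < η < 1` and let `κ` be a measure on `(0,∞)` integrating
`x ↦ x ∧ x²`, with `κ(ℝ) ∈ (0,∞]` and unbounded support (the case `ℓ = 0, r = ∞` of the
paper).  With `δ := 1 + 4/κ(ℝ) + inf{x | κ((0,x]) ≥ κ(ℝ)/2}`, `b := (δ − a + 2/η)²`, and
`Y(x) := 1 + 1_(b,∞)(x)/(√b κ((b,∞))) − 1_(0,δ](x)/(√b κ((0,δ]))` (the negative term omitted
when `κ(ℝ) = ∞`), the modified drift satisfies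
`a + ∫ x (Y(x) − 1) κ(dx) ≥ a + √b − δ/√b ≥ 0`. -/
theorem stmt9 (κ : Measure ℝ)
    (hsupp : κ (Set.Iic 0) = 0)
    (hκint : ∫⁻ x, ENNReal.ofReal (min x (x ^ 2)) ∂κ < ⊤)
    (hpos : 0 < κ Set.univ)
    (hub : ∀ c : ℝ, 0 < c → 0 < κ (Set.Ioi c))
    (a η : ℝ) (ha : a < 0) (hη0 : 0 < η) (hη1 : η < 1)
    (δ b : ℝ)
    (hδ : δ = 1 + 4 / (κ Set.univ).toReal +
      sInf {x : ℝ | (κ Set.univ).toReal / 2 ≤ (κ (Set.Ioc 0 x)).toReal})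
    (hb : b = (δ - a + 2 / η) ^ 2)
    (Y : ℝ → ℝ)
    (hY : ∀ x, Y x = 1 + Set.indicator (Set.Ioi b)
        (fun _ => 1 / (Real.sqrt b * (κ (Set.Ioi b)).toReal)) x
      - (if κ Set.univ = ⊤ then 0 else
          Set.indicator (Set.Ioc 0 δ)
            (fun _ => 1 / (Real.sqrt b * (κ (Set.Ioc 0 δ)).toReal)) x)) :
    a + Real.sqrt b - δ / Real.sqrt b ≤ a + ∫ x, x * (Y x - 1) ∂κ ∧
      0 ≤ a + Real.sqrt b - δ / Real.sqrt b :=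
  stmt9_general κ hκint hub a η ha hη0 δ b hδ hb Y hY
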